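/- For any dimension d ≥ 1, a self-adjoint operator F on ℂ^d satisfies Q_{ij}(F) ∈ ℝ for all i,j ∈ ℤ_d (i.e. F ∈ KD^r) if and only if its matrix entries in the standard basis satisfy F_{i,(i+k)} = F_{(i−k),i} for all i,k ∈ ℤ_d (indices mod d), where F_{ik} = ⟨a_i|F|a_k⟩. -/
import Mathlib


open Complex Matrix
open scoped ComplexOrder

noncomputable section

/-- `omega n = exp(2 π i / n)`, a primitive `n`-th root of unity. -/
def omega (n : ℕ) : ℂ := Complex.exp (2 * Real.pi * Complex.I / n)

/-- The standard basis vector `a i` of `ℂ^d`. -/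
def stdVec (d : ℕ) (i : Fin d) : Fin d → ℂ := fun k => if k = i then 1 else 0

/-- The Fourier (DFT) basis vector `b j = (1/√d) ∑ i, ω_d^(i j) • a i`. -/
def fourierVec (d : ℕ) (j : Fin d) : Fin d → ℂ :=
  fun i => ((1 / Real.sqrt d : ℝ) : ℂ) * omega d ^ (i.val * j.val)

/-- The rank-one projector `|v⟩⟨v|` of a vector `v`, as a matrix. -/
def proj (d : ℕ) (v : Fin d → ℂ) : Matrix (Fin d) (Fin d) ℂ :=
  Matrix.of fun i k => v i * (starRingEnd ℂ) (v k)

/-- The Kirkwood-Dirac quasiprobability `Q i j F = ⟨b j|a i⟩ * ⟨a i|F|b j⟩`. -/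
def KDQ (d : ℕ) (F : Matrix (Fin d) (Fin d) ℂ) (i j : Fin d) : ℂ :=
  (starRingEnd ℂ) (fourierVec d j i) * ∑ k, F i k * fourierVec d j k

/-- The set `KD⁺` of KD classical density matrices: positive semidefinite, trace one,
and all KD quasiprobabilities are nonnegative reals. -/
def KDplus (d : ℕ) : Set (Matrix (Fin d) (Fin d) ℂ) :=
  {ρ | ρ.PosSemidef ∧ ρ.trace = 1 ∧
    ∀ i j, (KDQ d ρ i j).im = 0 ∧ 0 ≤ (KDQ d ρ i j).re}

/-- The set `KD^r` of self-adjoint operators whose KD distribution is everywhere real. -/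
def KDr (d : ℕ) : Set (Matrix (Fin d) (Fin d) ℂ) :=
  {F | F.IsHermitian ∧ ∀ i j, (KDQ d F i j).im = 0}

/-- `A = {|a i⟩⟨a i| : i ∈ ℤ_d}`. -/
def setA (d : ℕ) : Set (Matrix (Fin d) (Fin d) ℂ) :=
  {M | ∃ i : Fin d, M = proj d (stdVec d i)}

/-- `B = {|b j⟩⟨b j| : j ∈ ℤ_d}`. -/
def setB (d : ℕ) : Set (Matrix (Fin d) (Fin d) ℂ) :=
  {M | ∃ j : Fin d, M = proj d (fourierVec d j)}

/-- For `d = p * q` : `ψ m s = (1/√q) ∑ k ∈ ℤ_q, ω_q^(s k) • a (k p + m)`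
(so the `i`-th coordinate is nonzero iff `i ≡ m [MOD p]`, with `k = i / p`). -/
def psiPQ (d p q : ℕ) (m : Fin p) (s : Fin q) : Fin d → ℂ :=
  fun i => if i.val % p = m.val then
    ((1 / Real.sqrt q : ℝ) : ℂ) * omega q ^ (s.val * (i.val / p)) else 0

/-- For `d = p * q` : `φ m' s' = (1/√p) ∑ k ∈ ℤ_p, ω_p^(s' k) • a (k q + m')`. -/
def phiPQ (d p q : ℕ) (m' : Fin q) (s' : Fin p) : Fin d → ℂ :=
  fun i => if i.val % q = m'.val then
    ((1 / Real.sqrt p : ℝ) : ℂ) * omega p ^ (s'.val * (i.val / q)) else 0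

/-- For `d = p ^ 2` : `C = {|ψ m s⟩⟨ψ m s| : m, s ∈ ℤ_p}`. -/
def setC2 (d p : ℕ) : Set (Matrix (Fin d) (Fin d) ℂ) :=
  {M | ∃ m s : Fin p, M = proj d (psiPQ d p p m s)}

/-- For `d = p * q` : `C = {|ψ m s⟩⟨ψ m s| : m ∈ ℤ_p, s ∈ ℤ_q}`. -/
def setC (d p q : ℕ) : Set (Matrix (Fin d) (Fin d) ℂ) :=
  {M | ∃ (m : Fin p) (s : Fin q), M = proj d (psiPQ d p q m s)}

/-- For `d = p * q` : `D = {|φ m' s'⟩⟨φ m' s'| : m' ∈ ℤ_q, s' ∈ ℤ_p}`. -/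
def setD (d p q : ℕ) : Set (Matrix (Fin d) (Fin d) ℂ) :=
  {M | ∃ (m' : Fin q) (s' : Fin p), M = proj d (phiPQ d p q m' s')}

/-- Matrix entries in the Fourier basis: `⟨b k|G|b j⟩`. -/
def entryB (d : ℕ) (G : Matrix (Fin d) (Fin d) ℂ) (k j : Fin d) : ℂ :=
  ∑ i, ∑ l, (starRingEnd ℂ) (fourierVec d k i) * G i l * fourierVec d j l

lemma omega_ne_zero (d : ℕ) : omega d ≠ 0 := Complex.exp_ne_zero _

lemma omega_prim {d : ℕ} (hd : 0 < d) : IsPrimitiveRoot (omega d) d :=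
  Complex.isPrimitiveRoot_exp d hd.ne'

lemma omega_zpow_congr {d : ℕ} (hd : 0 < d) {z z' : ℤ} (h : (d:ℤ) ∣ z - z') :
    omega d ^ z = omega d ^ z' := by
  obtain ⟨c, hc⟩ := h
  have h1 : omega d ^ (d:ℤ) = 1 := by
    rw [zpow_natCast]; exact (omega_prim hd).pow_eq_one
  have hz : z = z' + (d:ℤ) * c := by linarith
  rw [hz, zpow_add₀ (omega_ne_zero d), _root_.zpow_mul, h1, _root_.one_zpow, mul_one]

lemma conj_omega_zpow (d : ℕ) (z : ℤ) :
    (starRingEnd ℂ) (omega d ^ z) = omega d ^ (-z) := by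
  have hc : (starRingEnd ℂ) (omega d) = (omega d)⁻¹ := by
    rw [omega, ← Complex.exp_conj, ← Complex.exp_neg]
    congr 1
    simp [map_div₀, Complex.conj_I, map_ofNat]
    ring
  rw [map_zpow₀, hc, _root_.inv_zpow, ← _root_.zpow_neg]

lemma omega_orth {d : ℕ} (hd : 0 < d) (s t : Fin d) :
    ∑ j : Fin d, omega d ^ (((t.val:ℤ) - s.val) * j.val) = if t = s then (d:ℂ) else 0 := by
  by_cases h : t = s
  · subst h; simp
  · rw [if_neg h]
    set z : ℤ := (t.val:ℤ) - s.val with hzdef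
    have hz : ¬ (d:ℤ) ∣ z := by
      intro hdvd
      have habs : |z| < (d:ℤ) := by
        rw [abs_lt]
        have h1 : (t.val:ℤ) < d := by exact_mod_cast t.isLt
        have h2 : (s.val:ℤ) < d := by exact_mod_cast s.isLt
        have h3 : (0:ℤ) ≤ t.val := by positivity
        have h4 : (0:ℤ) ≤ s.val := by positivity
        constructor <;> [linarith; linarith]
      have hz0 : z = 0 := Int.eq_zero_of_abs_lt_dvd hdvd habs
      apply h
      have : (t.val:ℤ) = s.val := by linarith [hz0, hzdef]
      exact Fin.ext (by exact_mod_cast this)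
    have hne : omega d ^ z ≠ 1 := fun h1 =>
      hz (((omega_prim hd).zpow_eq_one_iff_dvd z).mp h1)
    calc ∑ j : Fin d, omega d ^ (z * j.val)
        = ∑ j : Fin d, (omega d ^ z) ^ (j.val) := by
          refine Finset.sum_congr rfl fun j _ => ?_
          rw [_root_.zpow_mul, zpow_natCast]
      _ = ∑ j ∈ Finset.range d, (omega d ^ z) ^ j := Fin.sum_univ_eq_sum_range _ d
      _ = ((omega d ^ z) ^ d - 1) / ((omega d ^ z) - 1) := geom_sum_eq hne d
      _ = 0 := by
          have h1 : (omega d ^ z) ^ d = 1 := by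
            rw [← zpow_natCast (omega d ^ z) d, ← _root_.zpow_mul, mul_comm, _root_.zpow_mul,
              zpow_natCast, (omega_prim hd).pow_eq_one, _root_.one_zpow]
          rw [h1, sub_self, zero_div]

lemma dft_inv {d : ℕ} (hd : 0 < d) (g : Fin d → ℂ)
    (h : ∀ j : Fin d, ∑ t, g t * omega d ^ (t.val * j.val) = 0) (s : Fin d) : g s = 0 := by
  have h0 : ∑ j : Fin d, omega d ^ (-((s.val : ℤ) * j.val)) *
      ∑ t, g t * omega d ^ (t.val * j.val) = 0 := by simp [h]
  have h1 : ∑ j : Fin d, omega d ^ (-((s.val:ℤ) * j.val)) *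
        ∑ t, g t * omega d ^ (t.val * j.val)
      = ∑ t, g t * ∑ j : Fin d, omega d ^ (((t.val:ℤ) - s.val) * j.val) := by
    simp_rw [Finset.mul_sum]
    rw [Finset.sum_comm]
    refine Finset.sum_congr rfl fun t _ => ?_
    refine Finset.sum_congr rfl fun j _ => ?_
    have he : ((t.val:ℤ) - s.val) * j.val = -((s.val:ℤ) * j.val) + (t.val * j.val : ℕ) := by
      push_cast; ring
    rw [he, zpow_add₀ (omega_ne_zero d), zpow_natCast]
    ring
  rw [h1] at h0
  simp_rw [omega_orth hd s] at h0
  simp only [mul_ite, mul_zero, Finset.sum_ite_eq', Finset.mem_univ, if_true] at h0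
  have hdne : (d:ℂ) ≠ 0 := Nat.cast_ne_zero.mpr hd.ne'
  exact (mul_eq_zero.mp h0).resolve_right hdne

/-- For any `d ≥ 1`, a self-adjoint `F` has everywhere-real KD distribution
iff `F_{i,(i+k)} = F_{(i−k),i}` for all `i, k ∈ ℤ_d` (indices mod `d`). -/
theorem stmt4 (d : ℕ) (hd : 0 < d) (F : Matrix (Fin d) (Fin d) ℂ)
    (hF : F.IsHermitian) :
    (∀ i j, (KDQ d F i j).im = 0) ↔ (∀ i k : Fin d, F i (i + k) = F (i - k) i) := by
  haveI : NeZero d := ⟨hd.ne'⟩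
  have hdC : ((d:ℝ)⁻¹) ≠ 0 := inv_ne_zero (Nat.cast_ne_zero.mpr hd.ne')
  have hherm : ∀ a b : Fin d, (starRingEnd ℂ) (F a b) = F b a := by
    intro a b
    conv_rhs => rw [← hF]
    rfl
  have hmodN : ∀ a : ℕ, (d:ℤ) ∣ ((a % d : ℕ) : ℤ) - a := by
    intro a
    have h2 : (d:ℤ) * ((a / d : ℕ):ℤ) + ((a % d : ℕ):ℤ) = a := by
      exact_mod_cast Nat.div_add_mod a d
    exact ⟨-((a / d : ℕ):ℤ), by linarith⟩
  have hvadd : ∀ a b : Fin d, (d:ℤ) ∣ ((a + b).val : ℤ) - ((a.val:ℤ) + b.val) := by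
    intro a b
    have h : (a + b).val = (a.val + b.val) % d := Fin.add_def a b ▸ rfl
    rw [h]
    have := hmodN (a.val + b.val)
    push_cast at this ⊢
    exact this
  have hvsub : ∀ a b : Fin d, (d:ℤ) ∣ ((a.val:ℤ)) - (((a - b).val:ℤ) + b.val) := by
    intro a b
    have h := hvadd (a - b) b
    rwa [sub_add_cancel] at h
  have hsq : ((1 / Real.sqrt d : ℝ) : ℂ) * ((1 / Real.sqrt d : ℝ) : ℂ) = ((d:ℝ)⁻¹ : ℂ) := by
    rw [← Complex.ofReal_mul, div_mul_div_comm, one_mul,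
      Real.mul_self_sqrt (Nat.cast_nonneg d), one_div, Complex.ofReal_inv]
  have hKDQ : ∀ i j : Fin d, KDQ d F i j
      = ((d:ℝ)⁻¹ : ℂ) * ∑ k, F i k * omega d ^ (((k.val:ℤ) * j.val) - ((i.val:ℤ) * j.val)) := by
    intro i j
    unfold KDQ fourierVec
    rw [_root_.map_mul, Complex.conj_ofReal, Finset.mul_sum, Finset.mul_sum]
    refine Finset.sum_congr rfl fun k _ => ?_
    have hci : (starRingEnd ℂ) (omega d ^ (i.val * j.val)) = omega d ^ (-((i.val:ℤ) * j.val)) := by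
      rw [← zpow_natCast (omega d) (i.val * j.val), conj_omega_zpow]
      norm_cast
    rw [hci]
    have he : ((k.val:ℤ) * j.val) - ((i.val:ℤ) * j.val)
        = ((k.val * j.val : ℕ) : ℤ) + (-((i.val:ℤ) * j.val)) := by push_cast; ring
    rw [he, zpow_add₀ (omega_ne_zero d), zpow_natCast, ← hsq]
    ring
  have himiff : ∀ i j : Fin d, ((KDQ d F i j).im = 0) ↔
      (∑ t : Fin d, (F i (i + t) - F (i - t) i) * omega d ^ (t.val * j.val) = 0) := by
    intro i j
    rw [hKDQ i j]
    set S := ∑ k, F i k * omega d ^ (((k.val:ℤ) * j.val) - ((i.val:ℤ) * j.val)) with hSdef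
    have him : (((d:ℝ)⁻¹:ℂ) * S).im = (d:ℝ)⁻¹ * S.im := by
      simp [Complex.mul_im]
    have step1 : (((d:ℝ)⁻¹:ℂ) * S).im = 0 ↔ S.im = 0 := by
      rw [him, mul_eq_zero]
      simp [hdC]
    have hS1 : S = ∑ t, F i (i + t) * omega d ^ (t.val * j.val) := by
      rw [hSdef]
      refine (Fintype.sum_equiv (Equiv.addLeft i) _ _ fun t => ?_).symm
      have het : Equiv.addLeft i t = i + t := rfl
      rw [het]
      have hz : omega d ^ ((t.val * j.val : ℕ) : ℤ)
          = omega d ^ ((((i+t).val:ℤ) * j.val) - ((i.val:ℤ) * j.val)) := by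
        refine omega_zpow_congr hd ?_
        have h2 := (hvadd i t).mul_right (j.val:ℤ)
        rw [show ((t.val * j.val : ℕ) : ℤ) - ((((i+t).val:ℤ) * j.val) - ((i.val:ℤ) * j.val))
            = -((((i+t).val:ℤ) - ((i.val:ℤ) + t.val)) * (j.val:ℤ)) from by push_cast; ring]
        exact dvd_neg.mpr h2
      rw [← zpow_natCast (omega d) (t.val * j.val), hz]
    have hS2 : (starRingEnd ℂ) S = ∑ t, F (i - t) i * omega d ^ (t.val * j.val) := by
      rw [hSdef, map_sum]
      refine (Fintype.sum_equiv (Equiv.subLeft i) _ _ fun t => ?_).symm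
      have het : Equiv.subLeft i t = i - t := rfl
      rw [het, _root_.map_mul, hherm, conj_omega_zpow]
      have hz : omega d ^ ((t.val * j.val : ℕ) : ℤ)
          = omega d ^ (-((((i-t).val:ℤ) * j.val) - ((i.val:ℤ) * j.val))) := by
        refine omega_zpow_congr hd ?_
        have h2 := (hvsub i t).mul_right (j.val:ℤ)
        rw [show ((t.val * j.val : ℕ) : ℤ) - (-((((i-t).val:ℤ) * j.val) - ((i.val:ℤ) * j.val)))
            = -((((i.val:ℤ)) - (((i-t).val:ℤ) + t.val)) * (j.val:ℤ)) from by push_cast; ring]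
        exact dvd_neg.mpr h2
      rw [← zpow_natCast (omega d) (t.val * j.val), hz]
    rw [step1, ← Complex.conj_eq_iff_im, hS2, hS1, eq_comm, ← sub_eq_zero,
      ← Finset.sum_sub_distrib]
    simp_rw [sub_mul]
  constructor
  · intro h i t
    have key : ∀ j : Fin d, ∑ u : Fin d,
        (fun u => F i (i + u) - F (i - u) i) u * omega d ^ (u.val * j.val) = 0 :=
      fun j => (himiff i j).mp (h i j)
    exact sub_eq_zero.mp (dft_inv hd (fun u => F i (i + u) - F (i - u) i) key t)
  · intro h i j
    rw [himiff i j]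
    refine Finset.sum_eq_zero fun t _ => ?_
    rw [sub_eq_zero.mpr (h i t), zero_mul]
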